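/- arXiv:1503.01818 — 3 statements merged into one kernel-verified Lean document; each statement's English description precedes it below -/
import Mathlib

section
/- Assume c_j > 0 and l_j > 0 for all j, set q_j = l_j/c_j, and assume the q_j are pairwise distinct. Let β > 0 satisfy β·q_j < φ'(0) for all j, and let x₀ ∈ ℝⁿ be the point with x₀_j = ψ(β q_j) for j = 1,…,n−1 and x₀_n = −ψ(β q_n); set d_j = c_j·φ''(x₀_j). (Sufficiency) If ∑_{j=1}^n l_j²/d_j > 0 and ∑_j l_j x₀_j = b, then x₀ is a local maximum of f on P. (Necessity) If x₀ is a local maximum of f on P, then ∑_{j=1}^n l_j²/d_j ≥ 0 and ∑_j l_j x₀_j = b. -/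
/-!
At `x₀` the Lagrange condition `cⱼ φ'(x₀ⱼ) = β lⱼ` holds, so on `P` the first-order term of the
second-order Taylor expansion of `f` at `x₀` vanishes and both claims reduce to the sign of the
diagonal form `∑ dⱼ δⱼ²` on the hyperplane `∑ lⱼ δⱼ = 0`. Exactly one `dⱼ` (the last) is positive,
and then Cauchy–Schwarz shows that this form is negative semidefinite on the hyperplane iff
`∑ lⱼ²/dⱼ ≥ 0`. A strict inequality survives the perturbation `d ↦ d + κ` for small `κ > 0`, which
absorbs the Taylor remainder.
-/

open Filter Topology Finset

theorem isLocalMaxOn_iff_exists_norm_sub_lt {E : Type*} [SeminormedAddCommGroup E] {f : E → ℝ}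
    {s : Set E} {a : E} : IsLocalMaxOn f s a ↔ ∃ ε > 0, ∀ x ∈ s, ‖x - a‖ < ε → f x ≤ f a := by
  simp only [IsLocalMaxOn, IsMaxFilter, eventually_nhdsWithin_iff, Metric.eventually_nhds_iff,
    dist_eq_norm]
  exact exists_congr fun ε => and_congr_right fun _ =>
    ⟨fun h x hx hxa => h hxa hx, fun h x hxa hx => h x hx hxa⟩

theorem deriv_even_of_odd {φ : ℝ → ℝ} (hodd : ∀ x, φ (-x) = -φ x) (x : ℝ) :
    deriv φ (-x) = deriv φ x := by
  have h := deriv_comp_neg (f := φ) (x := x)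
  simp only [hodd, deriv.fun_neg, neg_inj] at h
  exact h.symm

theorem taylor_two_isLittleO {g : ℝ → ℝ} (hg : ContDiff ℝ 2 g) (x : ℝ) :
    (fun y => g y - g x - deriv g x * (y - x) - deriv (deriv g) x / 2 * (y - x) ^ 2)
      =o[𝓝 x] fun y => (y - x) ^ 2 := by
  refine (taylor_isLittleO_univ (n := 2) hg).congr_left fun y => ?_
  simp only [taylorWithinEval_succ, taylor_within_zero_eval, iteratedDerivWithin_univ,
    iteratedDeriv_succ, iteratedDeriv_zero, Nat.factorial, Nat.cast_one, smul_eq_mul]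
  ring

theorem eventually_abs_taylor_two_le {g : ℝ → ℝ} (hg : ContDiff ℝ 2 g) (x : ℝ) {ε : ℝ}
    (hε : 0 < ε) :
    ∀ᶠ y in 𝓝 x, |g y - g x - deriv g x * (y - x) - deriv (deriv g) x / 2 * (y - x) ^ 2|
      ≤ ε * (y - x) ^ 2 := by
  filter_upwards [(taylor_two_isLittleO hg x).bound hε] with y hy
  simpa only [Real.norm_eq_abs, abs_of_nonneg (sq_nonneg (y - x))] using hy

section Separable

variable {ι : Type*} [Fintype ι]

theorem eventually_abs_sum_sub_le_of_lagrange {g : ι → ℝ → ℝ} (hg : ∀ j, ContDiff ℝ 2 (g j))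
    {p : EuclideanSpace ℝ ι} {β : ℝ} {l : ι → ℝ} (hcrit : ∀ j, deriv (g j) (p j) = β * l j)
    {ε : ℝ} (hε : 0 < ε) :
    ∀ᶠ x in 𝓝 p, ∑ j, l j * (x j - p j) = 0 →
      |∑ j, g j (x j) - ∑ j, g j (p j) - (∑ j, deriv (deriv (g j)) (p j) * (x j - p j) ^ 2) / 2|
        ≤ ε * ∑ j, (x j - p j) ^ 2 := by
  have hcoord : ∀ j, ∀ᶠ x in 𝓝 p, |g j (x j) - g j (p j) - deriv (g j) (p j) * (x j - p j)
      - deriv (deriv (g j)) (p j) / 2 * (x j - p j) ^ 2| ≤ ε * (x j - p j) ^ 2 := fun j =>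
    ((by fun_prop : Continuous fun x : EuclideanSpace ℝ ι => x j).tendsto p).eventually
      (eventually_abs_taylor_two_le (hg j) (p j) hε)
  filter_upwards [eventually_all.2 hcoord] with x hx hl
  calc _ = |∑ j, (g j (x j) - g j (p j) - deriv (g j) (p j) * (x j - p j)
          - deriv (deriv (g j)) (p j) / 2 * (x j - p j) ^ 2)| := by
        simp only [sum_sub_distrib, hcrit, mul_assoc, ← mul_sum, hl, mul_zero, sub_zero,
          sum_div, div_mul_eq_mul_div]
    _ ≤ ∑ j, |g j (x j) - g j (p j) - deriv (g j) (p j) * (x j - p j)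
          - deriv (deriv (g j)) (p j) / 2 * (x j - p j) ^ 2| := abs_sum_le_sum_abs _ _
    _ ≤ ∑ j, ε * (x j - p j) ^ 2 := sum_le_sum fun j _ => hx j
    _ = ε * ∑ j, (x j - p j) ^ 2 := (mul_sum _ _ _).symm

end Separable

section QuadraticForm

variable {ι : Type*} [Fintype ι] [DecidableEq ι] (N : ι) {a l : ι → ℝ}

theorem sum_mul_sq_nonpos_of_sum_mul_eq_zero (ha : ∀ j ≠ N, a j < 0) (hlN : l N ≠ 0)
    (hS : 0 ≤ ∑ j, l j ^ 2 / a j) {δ : ι → ℝ} (hδ : ∑ j, l j * δ j = 0) :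
    ∑ j, a j * δ j ^ 2 ≤ 0 := by
  set s := univ.erase N
  have ha' : ∀ j ∈ s, a j < 0 := fun j hj => ha j (ne_of_mem_erase hj)
  have hcs : (∑ j ∈ s, l j * δ j) ^ 2 ≤ (∑ j ∈ s, l j ^ 2 / -a j) * ∑ j ∈ s, -a j * δ j ^ 2 :=
    sum_sq_le_sum_mul_sum_of_sq_le_mul s
      (fun j hj => div_nonneg (sq_nonneg _) (neg_nonneg.2 (ha' j hj).le))
      (fun j hj => mul_nonneg (neg_nonneg.2 (ha' j hj).le) (sq_nonneg _))
      fun j hj => le_of_eq (by field_simp [(ha' j hj).ne])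
  have hB : ∑ j ∈ s, a j * δ j ^ 2 ≤ 0 :=
    sum_nonpos fun j hj => mul_nonpos_of_nonpos_of_nonneg (ha' j hj).le (sq_nonneg _)
  rw [← add_sum_erase _ _ (mem_univ N)] at hS hδ ⊢
  simp only [div_neg, sum_neg_distrib, neg_mul] at hcs
  rw [eq_neg_of_add_eq_zero_right hδ, neg_sq] at hcs
  rcases le_or_gt (a N) 0 with haN | haN
  · nlinarith [mul_nonpos_of_nonpos_of_nonneg haN (sq_nonneg (δ N))]
  · have hA : -(∑ j ∈ s, l j ^ 2 / a j) * a N ≤ l N ^ 2 := (le_div_iff₀ haN).1 (by linarith)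
    have hlN2 : 0 < l N ^ 2 := by positivity
    nlinarith [mul_le_mul_of_nonneg_left hcs haN.le, mul_nonneg (neg_nonneg.2 hB) (sq_nonneg (l N))]

theorem exists_sum_mul_eq_zero_and_sum_mul_sq_pos (ha : ∀ j ≠ N, a j ≠ 0) (haN : 0 < a N)
    (hlN : l N ≠ 0) (hS : ∑ j, l j ^ 2 / a j < 0) :
    ∃ δ : ι → ℝ, ∑ j, l j * δ j = 0 ∧ 0 < ∑ j, a j * δ j ^ 2 := by
  set T := ∑ j ∈ univ.erase N, l j ^ 2 / a j
  -- `δ = l / a` off `N`, corrected at `N` so that `∑ l δ = 0`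
  refine ⟨Function.update (fun j => l j / a j) N (-T / l N), ?_, ?_⟩
  all_goals
    rw [← add_sum_erase _ _ (mem_univ N), Function.update_self]
    rw [sum_congr rfl fun j hj => by rw [Function.update_of_ne (ne_of_mem_erase hj)]]
  · have hT : ∑ j ∈ univ.erase N, l j * (l j / a j) = T := sum_congr rfl fun j _ => by ring
    rw [hT, mul_div_cancel₀ _ hlN, neg_add_cancel]
  · have hT : ∑ j ∈ univ.erase N, a j * (l j / a j) ^ 2 = T :=
      sum_congr rfl fun j hj => by field_simp [ha j (ne_of_mem_erase hj)]
    rw [← add_sum_erase _ _ (mem_univ N)] at hS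
    have hTneg : T < 0 := by linarith [div_pos (by positivity : 0 < l N ^ 2) haN]
    have hfactor : a N * (-T / l N) ^ 2 + T = a N / l N ^ 2 * T * (l N ^ 2 / a N + T) := by
      field_simp
      ring
    rw [hT, hfactor]
    exact mul_pos_of_neg_of_neg (mul_neg_of_pos_of_neg (by positivity) hTneg) hS

theorem exists_pos_sum_mul_sq_le_of_sum_mul_eq_zero (ha : ∀ j ≠ N, a j < 0) (haN : 0 < a N)
    (hlN : l N ≠ 0) (hS : 0 < ∑ j, l j ^ 2 / a j) :
    ∃ κ > 0, ∀ δ : ι → ℝ, ∑ j, l j * δ j = 0 → ∑ j, a j * δ j ^ 2 ≤ -κ * ∑ j, δ j ^ 2 := by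
  have hcont : ContinuousAt (fun κ : ℝ => ∑ j, l j ^ 2 / (a j + κ)) 0 := by
    have hne : ∀ j, a j + 0 ≠ 0 := fun j => by
      rcases eq_or_ne j N with rfl | hj
      · simpa using haN.ne'
      · simpa using (ha j hj).ne
    fun_prop (disch := exact hne _)
  have hsum : ∀ᶠ κ in 𝓝 (0 : ℝ), 0 < ∑ j, l j ^ 2 / (a j + κ) :=
    hcont.eventually (eventually_gt_nhds (by simpa using hS))
  have hneg : ∀ᶠ κ in 𝓝 (0 : ℝ), ∀ j ≠ N, a j + κ < 0 := by
    refine eventually_all.2 fun j => ?_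
    rcases eq_or_ne j N with rfl | hj
    · exact Eventually.of_forall fun _ h => absurd rfl h
    · filter_upwards [eventually_lt_nhds (neg_pos.2 (ha j hj))] with κ hκ _
      linarith
  obtain ⟨κ, ⟨hκS, hκa⟩, hκ⟩ :=
    ((hsum.and hneg).filter_mono nhdsWithin_le_nhds).and self_mem_nhdsWithin |>.exists
      (f := 𝓝[>] (0 : ℝ))
  refine ⟨κ, hκ, fun δ hδ => ?_⟩
  have := sum_mul_sq_nonpos_of_sum_mul_eq_zero N hκa hlN hκS.le hδ
  simp only [add_mul, sum_add_distrib, ← mul_sum] at this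
  linarith

end QuadraticForm

section Lagrange

variable {ι : Type*} [Fintype ι] [DecidableEq ι] (N : ι) {g : ι → ℝ → ℝ}
  {p : EuclideanSpace ℝ ι} {β : ℝ} {l a : ι → ℝ}

theorem isLocalMaxOn_sum_of_sum_sq_div_pos (hg : ∀ j, ContDiff ℝ 2 (g j))
    (hcrit : ∀ j, deriv (g j) (p j) = β * l j) (ha : ∀ j, deriv (deriv (g j)) (p j) = a j)
    (hneg : ∀ j ≠ N, a j < 0) (hpos : 0 < a N) (hlN : l N ≠ 0) (hS : 0 < ∑ j, l j ^ 2 / a j) :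
    IsLocalMaxOn (fun x : EuclideanSpace ℝ ι => ∑ j, g j (x j))
      {x | ∑ j, l j * x j = ∑ j, l j * p j} p := by
  obtain ⟨κ, hκ, hquad⟩ := exists_pos_sum_mul_sq_le_of_sum_mul_eq_zero N hneg hpos hlN hS
  filter_upwards [nhdsWithin_le_nhds
      (eventually_abs_sum_sub_le_of_lagrange hg hcrit (half_pos hκ)), self_mem_nhdsWithin]
    with x hx hxH
  have hδ : ∑ j, l j * (x j - p j) = 0 := by
    simpa only [mul_sub, sum_sub_distrib, sub_eq_zero] using hxH
  have hle := (abs_le.1 (hx hδ)).2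
  simp only [ha] at hle
  linarith [hquad _ hδ]

theorem sum_sq_div_nonneg_of_isLocalMaxOn (hg : ∀ j, ContDiff ℝ 2 (g j))
    (hcrit : ∀ j, deriv (g j) (p j) = β * l j) (ha : ∀ j, deriv (deriv (g j)) (p j) = a j)
    (hne : ∀ j ≠ N, a j ≠ 0) (hpos : 0 < a N) (hlN : l N ≠ 0)
    (hmax : IsLocalMaxOn (fun x : EuclideanSpace ℝ ι => ∑ j, g j (x j))
      {x | ∑ j, l j * x j = ∑ j, l j * p j} p) :
    0 ≤ ∑ j, l j ^ 2 / a j := by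
  by_contra! hS
  obtain ⟨v, hv, hQ⟩ := exists_sum_mul_eq_zero_and_sum_mul_sq_pos N hne hpos hlN hS
  set Q := ∑ j, a j * v j ^ 2
  set V := ∑ j, v j ^ 2
  have hV : 0 ≤ V := sum_nonneg fun j _ => sq_nonneg _
  -- a Taylor error of at most `Q t² / 4` along the line `t ↦ p + t v`
  have hε : 0 < Q / (4 * (V + 1)) := by positivity
  have hline : Tendsto (fun t : ℝ => p + t • WithLp.toLp 2 v) (𝓝[≠] 0)
      (𝓝[{x | ∑ j, l j * x j = ∑ j, l j * p j}] p) := by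
    refine tendsto_nhdsWithin_iff.2 ⟨?_, Eventually.of_forall fun t => ?_⟩
    · exact tendsto_nhdsWithin_of_tendsto_nhds
        (Continuous.tendsto' (by fun_prop) 0 p (by simp))
    · simp [mul_add, sum_add_distrib, mul_left_comm _ t, ← mul_sum, hv]
  obtain ⟨t, ⟨hle, hbound⟩, ht⟩ := (hline.eventually (hmax.and
    ((eventually_abs_sum_sub_le_of_lagrange hg hcrit hε).filter_mono nhdsWithin_le_nhds))).and
      self_mem_nhdsWithin |>.exists
  have hcoord : ∀ j, (p + t • WithLp.toLp 2 v) j - p j = t * v j := fun j => by simp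
  simp only [hcoord, ha, mul_pow, mul_left_comm _ (t ^ 2), mul_left_comm _ t, ← mul_sum, hv,
    mul_zero, forall_const] at hbound
  have ht2 : 0 < t ^ 2 := pow_two_pos_of_ne_zero ht
  have hεV : Q / (4 * (V + 1)) * V ≤ Q / 4 := by
    rw [div_mul_eq_mul_div, div_le_div_iff₀ (by positivity) (by norm_num)]
    linarith
  linarith [(abs_le.1 hbound).1, mul_le_mul_of_nonneg_left hεV ht2.le, mul_pos ht2 hQ]

end Lagrange

theorem stmt_5_general (n : ℕ) (φ ψ : ℝ → ℝ)
    (hφC : ContDiff ℝ 2 φ)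
    (hodd : ∀ x : ℝ, φ (-x) = -φ x)
    (hφ'' : ∀ x : ℝ, x ≠ 0 → x * deriv (deriv φ) x < 0)
    (hψ : ∀ y : ℝ, 0 < y → y ≤ deriv φ 0 → 0 ≤ ψ y ∧ deriv φ (ψ y) = y)
    (c l q : Fin (n + 1) → ℝ) (hc : ∀ j, 0 < c j) (hl : ∀ j, 0 < l j)
    (hq : ∀ j, q j = l j / c j) (b : ℝ)
    (f : EuclideanSpace ℝ (Fin (n + 1)) → ℝ)
    (hf : ∀ x : EuclideanSpace ℝ (Fin (n + 1)), f x = ∑ i, c i * φ (x i))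
    (P : Set (EuclideanSpace ℝ (Fin (n + 1))))
    (hP : P = {x : EuclideanSpace ℝ (Fin (n + 1)) | ∑ j, l j * x j = b})
    (β : ℝ) (hβ : 0 < β) (hβq : ∀ j, β * q j < deriv φ 0)
    (x₀ : EuclideanSpace ℝ (Fin (n + 1)))
    (hx₀ : ∀ j, j ≠ Fin.last n → x₀ j = ψ (β * q j))
    (hx₀n : x₀ (Fin.last n) = -ψ (β * q (Fin.last n)))
    (d : Fin (n + 1) → ℝ) (hd : ∀ j, d j = c j * deriv (deriv φ) (x₀ j)) :
    ((0 < ∑ j, (l j) ^ 2 / d j) → (∑ j, l j * x₀ j) = b →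
      x₀ ∈ P ∧ ∃ ε > 0, ∀ x ∈ P, ‖x - x₀‖ < ε → f x ≤ f x₀) ∧
    ((x₀ ∈ P ∧ ∃ ε > 0, ∀ x ∈ P, ‖x - x₀‖ < ε → f x ≤ f x₀) →
      (0 ≤ ∑ j, (l j) ^ 2 / d j) ∧ (∑ j, l j * x₀ j) = b) := by
  have hψx₀ : ∀ j, 0 < ψ (β * q j) ∧ deriv φ (ψ (β * q j)) = β * q j := fun j => by
    obtain ⟨hnonneg, hderiv⟩ := hψ _ (by rw [hq]; exact mul_pos hβ (div_pos (hl j) (hc j)))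
      (hβq j).le
    exact ⟨hnonneg.lt_of_ne fun h => (hβq j).ne (by rw [← hderiv, ← h]), hderiv⟩
  have hφ'x₀ : ∀ j, deriv φ (x₀ j) = β * q j := by
    intro j
    rcases eq_or_ne j (Fin.last n) with rfl | hj
    · rw [hx₀n, deriv_even_of_odd hodd, (hψx₀ _).2]
    · rw [hx₀ j hj, (hψx₀ j).2]
  have hg : ∀ j, ContDiff ℝ 2 (fun t => c j * φ t) := fun j => contDiff_const.mul hφC
  have hcrit : ∀ j, deriv (fun t => c j * φ t) (x₀ j) = β * l j := by
    intro j
    simp only [deriv_const_mul_field', hφ'x₀, hq]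
    field_simp [(hc j).ne']
  have ha : ∀ j, deriv (deriv (fun t => c j * φ t)) (x₀ j) = d j := by
    intro j
    rw [deriv_const_mul_field', deriv_const_mul_field', hd]
  have hneg : ∀ j ≠ Fin.last n, d j < 0 := by
    intro j hj
    have hx : 0 < x₀ j := by rw [hx₀ j hj]; exact (hψx₀ j).1
    rw [hd]
    exact mul_neg_of_pos_of_neg (hc j) (neg_of_mul_neg_right (hφ'' _ hx.ne') hx.le)
  have hpos : 0 < d (Fin.last n) := by
    have hx : x₀ (Fin.last n) < 0 := by rw [hx₀n]; exact neg_neg_of_pos (hψx₀ _).1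
    rw [hd]
    exact mul_pos (hc _) (pos_of_mul_neg_right (hφ'' _ hx.ne) hx.le)
  obtain rfl : f = fun x => ∑ j, c j * φ (x j) := funext hf
  simp only [← isLocalMaxOn_iff_exists_norm_sub_lt]
  subst hP
  constructor
  · rintro hS rfl
    exact ⟨rfl, isLocalMaxOn_sum_of_sum_sq_div_pos _ hg hcrit ha hneg hpos (hl _).ne' hS⟩
  · rintro ⟨hb, hmax⟩
    obtain rfl : ∑ j, l j * x₀ j = b := hb
    exact ⟨sum_sq_div_nonneg_of_isLocalMaxOn _ hg hcrit ha (fun j hj => (hneg j hj).ne) hpos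
      (hl _).ne' hmax, rfl⟩

/-- Under (A1), with `cⱼ > 0`, `lⱼ > 0`, `qⱼ = lⱼ/cⱼ` pairwise distinct,
let `β > 0` with `β qⱼ < φ'(0)` for all `j`, and let `x₀` have coordinates
`x₀ⱼ = ψ(β qⱼ)` for `j ≠ n` and `x₀ₙ = −ψ(β qₙ)`; set `dⱼ = cⱼ φ''(x₀ⱼ)`.
Sufficiency: if `∑ lⱼ²/dⱼ > 0` and `∑ lⱼ x₀ⱼ = b`, then `x₀` is a local maximum of `f`
on `P`. Necessity: if `x₀` is a local maximum of `f` on `P`, then `∑ lⱼ²/dⱼ ≥ 0` and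
`∑ lⱼ x₀ⱼ = b`.  (Dimension is `n + 1 ≥ 2`; the distinguished last index plays the
role of the index `n` of the paper.) -/
theorem stmt_5 (n : ℕ) (hn : 1 ≤ n) (φ ψ : ℝ → ℝ)
    (hφC : ContDiff ℝ 2 φ)
    (hodd : ∀ x : ℝ, φ (-x) = -φ x)
    (hφ' : ∀ x : ℝ, 0 < deriv φ x)
    (hφ'' : ∀ x : ℝ, x ≠ 0 → x * deriv (deriv φ) x < 0)
    (hlim : ∃ L : ℝ, Filter.Tendsto φ Filter.atTop (nhds L))
    (hψ : ∀ y : ℝ, 0 < y → y ≤ deriv φ 0 → 0 ≤ ψ y ∧ deriv φ (ψ y) = y)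
    (hψinv : ∀ x : ℝ, 0 ≤ x → ψ (deriv φ x) = x)
    (c l q : Fin (n + 1) → ℝ) (hc : ∀ j, 0 < c j) (hl : ∀ j, 0 < l j)
    (hq : ∀ j, q j = l j / c j) (hqinj : Function.Injective q) (b : ℝ)
    (f : EuclideanSpace ℝ (Fin (n + 1)) → ℝ)
    (hf : ∀ x : EuclideanSpace ℝ (Fin (n + 1)), f x = ∑ i, c i * φ (x i))
    (P : Set (EuclideanSpace ℝ (Fin (n + 1))))
    (hP : P = {x : EuclideanSpace ℝ (Fin (n + 1)) | ∑ j, l j * x j = b})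
    (β : ℝ) (hβ : 0 < β) (hβq : ∀ j, β * q j < deriv φ 0)
    (x₀ : EuclideanSpace ℝ (Fin (n + 1)))
    (hx₀ : ∀ j, j ≠ Fin.last n → x₀ j = ψ (β * q j))
    (hx₀n : x₀ (Fin.last n) = -ψ (β * q (Fin.last n)))
    (d : Fin (n + 1) → ℝ) (hd : ∀ j, d j = c j * deriv (deriv φ) (x₀ j)) :
    ((0 < ∑ j, (l j) ^ 2 / d j) → (∑ j, l j * x₀ j) = b →
      x₀ ∈ P ∧ ∃ ε > 0, ∀ x ∈ P, ‖x - x₀‖ < ε → f x ≤ f x₀) ∧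
    ((x₀ ∈ P ∧ ∃ ε > 0, ∀ x ∈ P, ‖x - x₀‖ < ε → f x ≤ f x₀) →
      (0 ≤ ∑ j, (l j) ^ 2 / d j) ∧ (∑ j, l j * x₀ j) = b) :=
  stmt_5_general n φ ψ hφC hodd hφ'' hψ c l q hc hl hq b f hf P hP β hβ hβq x₀ hx₀ hx₀n d hd
end

section
/- Assume l_j > 0 for all j, the q_j > 0 are pairwise distinct, and q_n < max_{1≤j≤n−1} q_j. Then g₁'(β) = ∑_{j=1}^{n−1} l_j q_j ψ'(β q_j) − l_n q_n ψ'(β q_n) tends to −∞ as β tends to β_max = φ'(0)/max_j q_j from the left. -/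
/-! Let `c = φ'(0)` and `M = max q`, attained at an index `j₀ ≠ n` (unique, by injectivity).
On `(0, c)` the inverse `ψ` of `φ'|[0,∞)` is differentiable with `ψ' = 1 / φ''(ψ)`, which is
continuous there. For `j ≠ j₀` the point `β qⱼ` tends to `βmax qⱼ < c`, so those terms converge.
For `j₀`, `β q_{j₀} → c⁻`, hence `ψ(β q_{j₀}) → 0⁺` and `φ''(ψ(β q_{j₀})) → φ''(0) = 0⁻`, so the
`j₀` term, whose coefficient `l_{j₀} q_{j₀}` is positive, tends to `−∞`. -/

open Filter Set Topology

structure IsDecreasingInverse (f g : ℝ → ℝ) : Prop where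
  strictAntiOn : StrictAntiOn f (Ici 0)
  pos : ∀ x, 0 < f x
  nonneg : ∀ y ∈ Ioc 0 (f 0), 0 ≤ g y
  right_inv : ∀ y ∈ Ioc 0 (f 0), f (g y) = y

namespace IsDecreasingInverse

variable {f g : ℝ → ℝ}

theorem left_inv (h : IsDecreasingInverse f g) {x : ℝ} (hx : 0 ≤ x) : g (f x) = x := by
  have hfx : f x ∈ Ioc 0 (f 0) := ⟨h.pos x, h.strictAntiOn.antitoneOn self_mem_Ici hx hx⟩
  exact h.strictAntiOn.injOn (h.nonneg _ hfx) hx (h.right_inv _ hfx)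

theorem strictAntiOn_Ioc (h : IsDecreasingInverse f g) : StrictAntiOn g (Ioc 0 (f 0)) := by
  intro y₁ hy₁ y₂ hy₂ hlt
  refine lt_of_not_ge fun hle => hlt.not_ge ?_
  rw [← h.right_inv y₁ hy₁, ← h.right_inv y₂ hy₂]
  exact h.strictAntiOn.antitoneOn (h.nonneg y₁ hy₁) (h.nonneg y₂ hy₂) hle

theorem image_Ioc (h : IsDecreasingInverse f g) : g '' Ioc 0 (f 0) = Ici 0 := by
  refine Subset.antisymm (image_subset_iff.2 h.nonneg) fun x hx => ?_
  exact ⟨f x, ⟨h.pos x, h.strictAntiOn.antitoneOn self_mem_Ici hx hx⟩, h.left_inv hx⟩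

theorem pos_of_mem_Ioo (h : IsDecreasingInverse f g) {y : ℝ} (hy : y ∈ Ioo 0 (f 0)) : 0 < g y := by
  refine (h.nonneg y (Ioo_subset_Ioc_self hy)).lt_of_ne fun h0 => hy.2.ne ?_
  rw [← h.right_inv y (Ioo_subset_Ioc_self hy), ← h0]

theorem continuousAt (h : IsDecreasingInverse f g) {y : ℝ} (hy : y ∈ Ioo 0 (f 0)) :
    ContinuousAt g y := by
  have hs : Ioc 0 (f 0) ∈ 𝓝 y := mem_of_superset (isOpen_Ioo.mem_nhds hy) Ioo_subset_Ioc_self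
  refine h.strictAntiOn_Ioc.dual_right.continuousAt_of_image_mem_nhds hs ?_
  rw [image_comp, h.image_Ioc, OrderDual.toDual.image_eq_preimage_symm]
  exact Ici_mem_nhds (h.pos_of_mem_Ioo hy)

theorem tendsto_nhdsLT (h : IsDecreasingInverse f g) : Tendsto g (𝓝[<] f 0) (𝓝[>] 0) := by
  have hs : Ioc 0 (f 0) ∈ 𝓝[≤] f 0 := Ioc_mem_nhdsLE (h.pos 0)
  have hcont : ContinuousWithinAt g (Iic (f 0)) (f 0) := by
    refine h.strictAntiOn_Ioc.dual_right.continuousWithinAt_left_of_image_mem_nhdsWithin hs ?_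
    rw [image_comp, h.image_Ioc, OrderDual.toDual.image_eq_preimage_symm, Function.comp_apply,
      h.left_inv le_rfl]
    exact self_mem_nhdsWithin
  refine tendsto_nhdsWithin_iff.2 ⟨?_, ?_⟩
  · simpa [h.left_inv le_rfl] using hcont.tendsto.mono_left (nhdsWithin_mono _ Iio_subset_Iic_self)
  · filter_upwards [Ioo_mem_nhdsLT (h.pos 0)] with y hy using h.pos_of_mem_Ioo hy

theorem deriv_eq (h : IsDecreasingInverse f g) (hf : Differentiable ℝ f)
    (hf' : ∀ x, 0 < x → deriv f x < 0) {y : ℝ} (hy : y ∈ Ioo 0 (f 0)) :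
    deriv g y = (deriv f (g y))⁻¹ := by
  have hinv : ∀ᶠ z in 𝓝 y, f (g z) = z := by
    filter_upwards [isOpen_Ioo.mem_nhds hy] with z hz using h.right_inv z (Ioo_subset_Ioc_self hz)
  exact ((hf (g y)).hasDerivAt.of_local_left_inverse (h.continuousAt hy)
    (hf' _ (h.pos_of_mem_Ioo hy)).ne hinv).deriv

theorem tendsto_deriv (h : IsDecreasingInverse f g) (hf : ContDiff ℝ 1 f)
    (hf' : ∀ x, 0 < x → deriv f x < 0) {y : ℝ} (hy : y ∈ Ioo 0 (f 0)) :
    Tendsto (deriv g) (𝓝 y) (𝓝 (deriv f (g y))⁻¹) := by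
  have hlim : Tendsto (fun z => (deriv f (g z))⁻¹) (𝓝 y) (𝓝 (deriv f (g y))⁻¹) :=
    (((hf.continuous_deriv le_rfl).tendsto _).comp (h.continuousAt hy)).inv₀
      (hf' _ (h.pos_of_mem_Ioo hy)).ne
  refine hlim.congr' ?_
  filter_upwards [isOpen_Ioo.mem_nhds hy] with z hz
  exact (h.deriv_eq (hf.differentiable one_ne_zero) hf' hz).symm

theorem tendsto_deriv_nhdsLT (h : IsDecreasingInverse f g) (hf : ContDiff ℝ 1 f)
    (hf' : ∀ x, 0 < x → deriv f x < 0) (hf'0 : deriv f 0 = 0) :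
    Tendsto (deriv g) (𝓝[<] f 0) atBot := by
  have hf'g : Tendsto (fun y => deriv f (g y)) (𝓝[<] f 0) (𝓝[<] 0) := by
    refine tendsto_nhdsWithin_iff.2 ⟨?_, ?_⟩
    · have := ((hf.continuous_deriv le_rfl).tendsto 0).comp
        (h.tendsto_nhdsLT.mono_right nhdsWithin_le_nhds)
      rwa [hf'0] at this
    · filter_upwards [h.tendsto_nhdsLT self_mem_nhdsWithin] with y hy using hf' _ hy
  refine (tendsto_inv_nhdsLT_zero.comp hf'g).congr' ?_
  filter_upwards [Ioo_mem_nhdsLT (h.pos 0)] with y hy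
  exact (h.deriv_eq (hf.differentiable one_ne_zero) hf' hy).symm

theorem tendsto_deriv_comp_mul (h : IsDecreasingInverse f g) (hf : ContDiff ℝ 1 f)
    (hf' : ∀ x, 0 < x → deriv f x < 0) {q M : ℝ} (hq : 0 < q) (hqM : q < M) :
    Tendsto (fun β => deriv g (β * q)) (𝓝[<] (f 0 / M))
      (𝓝 (deriv f (g (f 0 / M * q)))⁻¹) := by
  have hM : 0 < M := hq.trans hqM
  have hmem : f 0 / M * q ∈ Ioo 0 (f 0) := by
    refine ⟨by have := h.pos 0; positivity, ?_⟩
    rw [div_mul_eq_mul_div, div_lt_iff₀ hM]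
    exact mul_lt_mul_of_pos_left hqM (h.pos 0)
  exact (h.tendsto_deriv hf hf' hmem).comp
    (((continuous_mul_const q).tendsto _).mono_left nhdsWithin_le_nhds)

theorem tendsto_deriv_comp_mul_atBot (h : IsDecreasingInverse f g) (hf : ContDiff ℝ 1 f)
    (hf' : ∀ x, 0 < x → deriv f x < 0) (hf'0 : deriv f 0 = 0) {M : ℝ} (hM : 0 < M) :
    Tendsto (fun β => deriv g (β * M)) (𝓝[<] (f 0 / M)) atBot := by
  have hmul : Tendsto (· * M) (𝓝[<] (f 0 / M)) (𝓝[<] (f 0 / M * M)) :=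
    (continuous_mul_const M).continuousWithinAt.tendsto_nhdsWithin
      fun β hβ => mul_lt_mul_of_pos_right hβ hM
  rw [div_mul_cancel₀ _ hM.ne'] at hmul
  exact (h.tendsto_deriv_nhdsLT hf hf' hf'0).comp hmul

end IsDecreasingInverse

theorem eq_zero_of_forall_mul_neg {h : ℝ → ℝ} (hc : ContinuousAt h 0)
    (hneg : ∀ x, x ≠ 0 → x * h x < 0) : h 0 = 0 := by
  have hle : h 0 ≤ 0 := by
    refine le_of_tendsto (hc.mono_left (nhdsWithin_le_nhds (s := Ioi 0))) ?_
    filter_upwards [self_mem_nhdsWithin] with x (hx : 0 < x)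
    nlinarith [hneg x hx.ne']
  have hge : 0 ≤ h 0 := by
    refine ge_of_tendsto (hc.mono_left (nhdsWithin_le_nhds (s := Iio 0))) ?_
    filter_upwards [self_mem_nhdsWithin] with x (hx : x < 0)
    nlinarith [hneg x hx.ne]
  exact le_antisymm hle hge

theorem tendsto_finset_sum_atBot {ι α : Type*} {l : Filter α} {s : Finset ι} {F : ι → α → ℝ}
    {i₀ : ι} (hi₀ : i₀ ∈ s) (h₀ : Tendsto (F i₀) l atBot)
    (h : ∀ i ∈ s, i ≠ i₀ → ∃ a, Tendsto (F i) l (𝓝 a)) :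
    Tendsto (fun x => ∑ i ∈ s, F i x) l atBot := by
  classical
  choose! a ha using h
  simp_rw [← Finset.add_sum_erase s _ hi₀]
  refine h₀.atBot_add (tendsto_finsetSum (a := a) _ fun i hi => ?_)
  exact ha i (Finset.mem_of_mem_erase hi) (Finset.ne_of_mem_erase hi)

theorem exists_forall_lt_of_injective {ι α : Type*} [Fintype ι] [Nonempty ι] [LinearOrder α]
    {q : ι → α} (hq : Function.Injective q) :
    ∃ j₀, (∀ j, j ≠ j₀ → q j < q j₀) ∧ Finset.univ.sup' Finset.univ_nonempty q = q j₀ := by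
  obtain ⟨j₀, -, hj₀⟩ := Finset.exists_mem_eq_sup' Finset.univ_nonempty q
  exact ⟨j₀, fun j hj => hj₀ ▸ (Finset.le_sup' q (Finset.mem_univ j)).lt_of_ne
    fun h => hj (hq (h.trans hj₀)), hj₀⟩

theorem isDecreasingInverse_deriv {φ ψ : ℝ → ℝ} (hφ : Continuous (deriv φ))
    (hφ' : ∀ x, 0 < deriv φ x) (hφ'' : ∀ x, 0 < x → deriv (deriv φ) x < 0)
    (hψ : ∀ y : ℝ, 0 < y → y ≤ deriv φ 0 → 0 ≤ ψ y ∧ deriv φ (ψ y) = y) :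
    IsDecreasingInverse (deriv φ) ψ where
  strictAntiOn := strictAntiOn_of_deriv_neg (convex_Ici 0) hφ.continuousOn fun x hx =>
    hφ'' x (by rwa [interior_Ici] at hx)
  pos := hφ'
  nonneg y hy := (hψ y hy.1 hy.2).1
  right_inv y hy := (hψ y hy.1 hy.2).2

theorem stmt_7_general (n : ℕ) (φ ψ : ℝ → ℝ)
    (hφC : ContDiff ℝ 2 φ)
    (hφ' : ∀ x : ℝ, 0 < deriv φ x)
    (hφ'' : ∀ x : ℝ, x ≠ 0 → x * deriv (deriv φ) x < 0)
    (hψ : ∀ y : ℝ, 0 < y → y ≤ deriv φ 0 → 0 ≤ ψ y ∧ deriv φ (ψ y) = y)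
    (l q : Fin (n + 1) → ℝ) (hl : ∀ j, 0 < l j) (hqpos : ∀ j, 0 < q j)
    (hqinj : Function.Injective q)
    (hqn : ∃ j, j ≠ Fin.last n ∧ q (Fin.last n) < q j)
    (βmax : ℝ) (hβmax : βmax = deriv φ 0 / Finset.univ.sup' Finset.univ_nonempty q)
    (G : ℝ → ℝ)
    (hG : ∀ β : ℝ, G β =
      (∑ j ∈ Finset.univ.erase (Fin.last n), l j * q j * deriv ψ (β * q j)) -
        l (Fin.last n) * q (Fin.last n) * deriv ψ (β * q (Fin.last n))) :
    Filter.Tendsto G (nhdsWithin βmax (Set.Iio βmax)) Filter.atBot := by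
  have hf : ContDiff ℝ 1 (deriv φ) := hφC.iterate_deriv' 1 1
  have hneg : ∀ x, 0 < x → deriv (deriv φ) x < 0 := fun x hx => by nlinarith [hφ'' x hx.ne']
  have hφ''0 : deriv (deriv φ) 0 = 0 :=
    eq_zero_of_forall_mul_neg (hf.continuous_deriv le_rfl).continuousAt hφ''
  have hinv := isDecreasingInverse_deriv hf.continuous hφ' hneg hψ
  obtain ⟨j₀, hlt, hmax⟩ := exists_forall_lt_of_injective hqinj
  rw [hmax] at hβmax
  subst hβmax
  have hj₀last : j₀ ≠ Fin.last n := by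
    obtain ⟨j, hj, hlast⟩ := hqn
    rintro rfl
    exact lt_asymm hlast (hlt j hj)
  have hsum := tendsto_finset_sum_atBot (F := fun j β => l j * q j * deriv ψ (β * q j))
    (Finset.mem_erase.2 ⟨hj₀last, Finset.mem_univ j₀⟩)
    ((hinv.tendsto_deriv_comp_mul_atBot hf hneg hφ''0 (hqpos j₀)).const_mul_atBot
      (mul_pos (hl j₀) (hqpos j₀)))
    fun j _ hj => ⟨_, (hinv.tendsto_deriv_comp_mul hf hneg (hqpos j) (hlt j hj)).const_mul _⟩
  have hlast := hinv.tendsto_deriv_comp_mul hf hneg (hqpos _) (hlt _ hj₀last.symm)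
  exact (hsum.atBot_add (hlast.const_mul (l (Fin.last n) * q (Fin.last n))).neg).congr
    fun β => by rw [hG, sub_eq_add_neg]

/-- Under (A1), with `lⱼ > 0`, `qⱼ > 0` pairwise distinct and the last
`q` not the maximal one, `g₁'(β) = ∑_{j≠n} lⱼ qⱼ ψ'(β qⱼ) − lₙ qₙ ψ'(β qₙ)` tends to
`−∞` as `β → β_max⁻`, where `β_max = φ'(0)/max_j qⱼ`. -/
theorem stmt_7 (n : ℕ) (hn : 1 ≤ n) (φ ψ : ℝ → ℝ)
    (hφC : ContDiff ℝ 2 φ)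
    (hodd : ∀ x : ℝ, φ (-x) = -φ x)
    (hφ' : ∀ x : ℝ, 0 < deriv φ x)
    (hφ'' : ∀ x : ℝ, x ≠ 0 → x * deriv (deriv φ) x < 0)
    (hlim : ∃ L : ℝ, Filter.Tendsto φ Filter.atTop (nhds L))
    (hψ : ∀ y : ℝ, 0 < y → y ≤ deriv φ 0 → 0 ≤ ψ y ∧ deriv φ (ψ y) = y)
    (hψinv : ∀ x : ℝ, 0 ≤ x → ψ (deriv φ x) = x)
    (l q : Fin (n + 1) → ℝ) (hl : ∀ j, 0 < l j) (hqpos : ∀ j, 0 < q j)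
    (hqinj : Function.Injective q)
    (hqn : ∃ j, j ≠ Fin.last n ∧ q (Fin.last n) < q j)
    (βmax : ℝ) (hβmax : βmax = deriv φ 0 / Finset.univ.sup' Finset.univ_nonempty q)
    (G : ℝ → ℝ)
    (hG : ∀ β : ℝ, G β =
      (∑ j ∈ Finset.univ.erase (Fin.last n), l j * q j * deriv ψ (β * q j)) -
        l (Fin.last n) * q (Fin.last n) * deriv ψ (β * q (Fin.last n))) :
    Filter.Tendsto G (nhdsWithin βmax (Set.Iio βmax)) Filter.atBot :=
  stmt_7_general n φ ψ hφC hφ' hφ'' hψ l q hl hqpos hqinj hqn βmax hβmax G hG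
end

section
/- Assume c_j > 0 and l_j > 0 for all j, q_j = l_j/c_j, and the q_j are pairwise distinct. Then f cannot have local maxima on P both in the open main orthant and in the side orthant: there do not exist points x₀, x₁ ∈ P, both local maxima of f on P, such that every coordinate of x₀ is strictly positive while x₁ satisfies x₁_j > 0 for j = 1,…,n−1 and x₁_n < 0. -/
/-!
At a local maximum `x` of `f` on `P` the Lagrange condition gives `φ'(xⱼ) = β qⱼ` for one `β > 0`,
so `xⱼ = ±ψ(β qⱼ)` and the constraint reads `∑ ± lⱼ ψ(β qⱼ) = b`: with `β₀` and all signs `+` for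
`x₀`, with `β₁` and only the last sign `-` for `x₁`. Testing the second-order condition at `x₁` on
the extremal direction of the hyperplane gives `∑_{j<n} lⱼ qⱼ |ψ'(β₁qⱼ)| ≤ lₙ qₙ |ψ'(β₁qₙ)|`.
By (A2) when `qⱼ < qₙ` and by (A4) when `qⱼ > qₙ`, the decrease `ψ(β₁qⱼ) - ψ(β₂qⱼ)`, where
`β₂ = max β₀ β₁`, is at most `qⱼ ψ'(β₁qⱼ) / (qₙ ψ'(β₁qₙ)) · ψ(β₁qₙ)`. Summing these bounds,
`b ≤ ∑_{j<n} lⱼ ψ(β₂qⱼ) < ∑ⱼ lⱼ ψ(β₂qⱼ) ≤ ∑ⱼ lⱼ ψ(β₀qⱼ) = b`.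
-/

open Set Filter Topology

theorem IsLocalMax.deriv_deriv_nonpos {f : ℝ → ℝ} {a : ℝ} (h : IsLocalMax f a)
    (hc : ContinuousAt f a) : deriv (deriv f) a ≤ 0 := by
  by_contra! hpos
  have hconst : f =ᶠ[𝓝 a] fun _ => f a :=
    (h.and (isLocalMin_of_deriv_deriv_pos hpos h.deriv_eq_zero hc)).mono
      fun _ hx => le_antisymm hx.1 hx.2
  have hzero : deriv (deriv f) a = 0 := by
    rw [hconst.deriv.deriv_eq]
    simp
  exact hpos.ne' hzero

theorem isLocalMaxOn_of_forall_norm_sub_lt {E β : Type*} [SeminormedAddCommGroup E] [Preorder β]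
    {f : E → β} {s : Set E} {a : E} (h : ∃ ε > 0, ∀ x ∈ s, ‖x - a‖ < ε → f x ≤ f a) :
    IsLocalMaxOn f s a := by
  obtain ⟨ε, hε, h⟩ := h
  filter_upwards [inter_mem_nhdsWithin s (Metric.ball_mem_nhds a hε)] with x ⟨hxs, hx⟩
  exact h x hxs (mem_ball_iff_norm.mp hx)

theorem IsLocalMaxOn.isLocalMax_comp_line {E β : Type*} [NormedAddCommGroup E] [NormedSpace ℝ E]
    [Preorder β] {f : E → β} {s : Set E} {a v : E} (h : IsLocalMaxOn f s a)
    (hs : ∀ t : ℝ, a + t • v ∈ s) : IsLocalMax (fun t : ℝ => f (a + t • v)) 0 := by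
  rw [← isLocalMaxOn_univ_iff]
  exact IsLocalMaxOn.comp_continuousOn (g := fun t : ℝ => a + t • v) (by simpa using h)
    (fun t _ => hs t) (by fun_prop) (mem_univ 0)

section Optimality

variable {ι : Type*} [Fintype ι] {φ : ℝ → ℝ}

theorem hasDerivAt_sum_mul_comp_line {φ' : ℝ → ℝ} (hφ : ∀ x, HasDerivAt φ (φ' x) x)
    (c x v : ι → ℝ) (t : ℝ) :
    HasDerivAt (fun t => ∑ i, c i * φ (x i + t * v i)) (∑ i, c i * v i * φ' (x i + t * v i)) t :=
  HasDerivAt.fun_sum fun i _ =>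
    ((hφ _).comp t (((hasDerivAt_id t).mul_const (v i)).const_add (x i))).const_mul (c i)
      |>.congr_deriv (by simp; ring)

theorem IsLocalMax.sum_deriv_eq_zero_and_sum_deriv_deriv_nonpos (hφ : ContDiff ℝ 2 φ)
    (c x v : ι → ℝ) (h : IsLocalMax (fun t => ∑ i, c i * φ (x i + t * v i)) 0) :
    ∑ i, c i * deriv φ (x i) * v i = 0 ∧ ∑ i, c i * deriv (deriv φ) (x i) * v i ^ 2 ≤ 0 := by
  have hd1 := hasDerivAt_sum_mul_comp_line (fun y => (hφ.differentiable two_ne_zero y).hasDerivAt)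
    c x v
  have hd2 := hasDerivAt_sum_mul_comp_line
    (fun y => (hφ.differentiable_deriv_two y).hasDerivAt) (fun i => c i * v i) x v 0
  have hderiv : deriv (fun t => ∑ i, c i * φ (x i + t * v i)) =
      fun t => ∑ i, c i * v i * deriv φ (x i + t * v i) := funext fun t => (hd1 t).deriv
  have hsecond := h.deriv_deriv_nonpos (hd1 0).continuousAt
  rw [hderiv, hd2.deriv] at hsecond
  have hfirst := (hd1 0).deriv.symm.trans h.deriv_eq_zero
  constructor
  · simpa only [zero_mul, add_zero, mul_right_comm] using hfirst
  · convert hsecond using 2 with i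
    ring_nf

theorem eq_div_mul_of_forall_sum_mul_eq_zero [DecidableEq ι] {g l : ι → ℝ} {i₀ : ι}
    (hl : l i₀ ≠ 0) (h : ∀ v : ι → ℝ, ∑ j, l j * v j = 0 → ∑ j, g j * v j = 0) (j : ι) :
    g j = g i₀ / l i₀ * l j := by
  have key := h (Pi.single j (l i₀) - Pi.single i₀ (l j))
    (by simp [Pi.single_apply, mul_sub, Finset.sum_sub_distrib, mul_comm])
  simp only [Pi.sub_apply, Pi.single_apply, mul_sub, mul_ite, mul_zero, Finset.sum_sub_distrib,
    Finset.sum_ite_eq', Finset.mem_univ, if_true] at key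
  field_simp
  linarith

theorem sum_mul_add_smul_eq {l v : ι → ℝ} {b : ℝ} {x : EuclideanSpace ℝ ι}
    (hx : ∑ j, l j * x j = b) (hv : ∑ j, l j * v j = 0) (t : ℝ) :
    ∑ j, l j * (x + t • WithLp.toLp 2 v) j = b := by
  simp only [PiLp.add_apply, PiLp.smul_apply, smul_eq_mul, mul_add, Finset.sum_add_distrib,
    mul_left_comm _ t, ← Finset.mul_sum, hx, hv, mul_zero, add_zero]

theorem IsLocalMaxOn.optimality_on_hyperplane (hφ : ContDiff ℝ 2 φ) {c l : ι → ℝ} {b : ℝ}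
    {x : EuclideanSpace ℝ ι}
    (hmax : IsLocalMaxOn (fun y : EuclideanSpace ℝ ι => ∑ i, c i * φ (y i))
      {y | ∑ j, l j * y j = b} x)
    (hx : ∑ j, l j * x j = b) {v : ι → ℝ} (hv : ∑ j, l j * v j = 0) :
    ∑ i, c i * deriv φ (x i) * v i = 0 ∧ ∑ i, c i * deriv (deriv φ) (x i) * v i ^ 2 ≤ 0 :=
  IsLocalMax.sum_deriv_eq_zero_and_sum_deriv_deriv_nonpos hφ c x.ofLp v
    (by simpa using hmax.isLocalMax_comp_line (v := WithLp.toLp 2 v) (sum_mul_add_smul_eq hx hv))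

theorem IsLocalMaxOn.exists_deriv_eq_mul_div [Nonempty ι] (hφ : ContDiff ℝ 2 φ)
    (hφ' : ∀ x, 0 < deriv φ x) {c l : ι → ℝ} (hc : ∀ j, 0 < c j) (hl : ∀ j, 0 < l j) {b : ℝ}
    {x : EuclideanSpace ℝ ι}
    (hmax : IsLocalMaxOn (fun y : EuclideanSpace ℝ ι => ∑ i, c i * φ (y i))
      {y | ∑ j, l j * y j = b} x)
    (hx : ∑ j, l j * x j = b) :
    ∃ β > 0, ∀ j, deriv φ (x j) = β * (l j / c j) := by
  classical
  let i₀ := Classical.arbitrary ι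
  have hmul := eq_div_mul_of_forall_sum_mul_eq_zero (g := fun j => c j * deriv φ (x j))
    (hl i₀).ne' fun v hv => (hmax.optimality_on_hyperplane hφ hx hv).1
  refine ⟨c i₀ * deriv φ (x i₀) / l i₀, div_pos (mul_pos (hc i₀) (hφ' _)) (hl i₀), ?_⟩
  intro j
  have := (hc j).ne'
  rw [mul_div_assoc', eq_div_iff this, mul_comm, hmul j]

end Optimality

section Parity

variable {𝕜 F : Type*} [NontriviallyNormedField 𝕜] [NormedAddCommGroup F] [NormedSpace 𝕜 F]
  {f : 𝕜 → F}

theorem Function.Odd.even_deriv (hf : Function.Odd f) : Function.Even (deriv f) := fun x => by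
  have h := deriv_comp_neg f x
  simp only [hf _, deriv.fun_neg] at h
  exact (neg_injective h).symm

theorem Function.Even.odd_deriv (hf : Function.Even f) : Function.Odd (deriv f) := fun x => by
  have h := deriv_comp_neg f x
  simp only [hf _] at h
  rw [h, neg_neg]

end Parity

theorem Function.Even.apply_abs {α β : Type*} [AddCommGroup α] [LinearOrder α]
    [IsOrderedAddMonoid α] {g : α → β} (hg : Function.Even g) (x : α) : g |x| = g x := by
  rcases le_total 0 x with hx | hx
  · rw [abs_of_nonneg hx]
  · rw [abs_of_nonpos hx, hg]

section Derivatives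

variable {φ ψ : ℝ → ℝ}

theorem deriv_deriv_neg_of_pos (hφ'' : ∀ x, x ≠ 0 → x * deriv (deriv φ) x < 0) {x : ℝ}
    (hx : 0 < x) : deriv (deriv φ) x < 0 :=
  neg_of_mul_neg_right (hφ'' x hx.ne') hx.le

theorem deriv_deriv_pos_of_neg (hφ'' : ∀ x, x ≠ 0 → x * deriv (deriv φ) x < 0) {x : ℝ}
    (hx : x < 0) : 0 < deriv (deriv φ) x :=
  pos_of_mul_neg_right (hφ'' x hx.ne) hx.le

theorem strictAntiOn_deriv_Ici (hφ : ContDiff ℝ 2 φ)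
    (hφ'' : ∀ x, x ≠ 0 → x * deriv (deriv φ) x < 0) : StrictAntiOn (deriv φ) (Ici 0) := by
  refine strictAntiOn_of_deriv_neg (convex_Ici 0)
    hφ.differentiable_deriv_two.continuous.continuousOn fun x hx => ?_
  rw [interior_Ici] at hx
  exact deriv_deriv_neg_of_pos hφ'' hx

theorem deriv_mem_Ioo_of_ne_zero (hodd : Function.Odd φ) (hφ' : ∀ x, 0 < deriv φ x)
    (hanti : StrictAntiOn (deriv φ) (Ici 0)) {x : ℝ} (hx : x ≠ 0) :
    deriv φ x ∈ Ioo 0 (deriv φ 0) := by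
  refine ⟨hφ' x, ?_⟩
  rw [← hodd.even_deriv.apply_abs]
  exact hanti self_mem_Ici (abs_nonneg x) (abs_pos.mpr hx)

theorem inverse_deriv_eq_abs (hodd : Function.Odd φ)
    (hψinv : ∀ x, 0 ≤ x → ψ (deriv φ x) = x) (x : ℝ) : ψ (deriv φ x) = |x| := by
  rw [← hodd.even_deriv.apply_abs, hψinv _ (abs_nonneg x)]

theorem inverse_pos_of_mem_Ioo
    (hψ : ∀ y, 0 < y → y ≤ deriv φ 0 → 0 ≤ ψ y ∧ deriv φ (ψ y) = y) {y : ℝ}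
    (hy : y ∈ Ioo 0 (deriv φ 0)) : 0 < ψ y := by
  obtain ⟨hnonneg, heq⟩ := hψ y hy.1 hy.2.le
  refine hnonneg.lt_of_ne fun h => hy.2.ne' ?_
  rwa [← h] at heq

theorem strictAntiOn_inverse (hanti : StrictAntiOn (deriv φ) (Ici 0))
    (hψ : ∀ y, 0 < y → y ≤ deriv φ 0 → 0 ≤ ψ y ∧ deriv φ (ψ y) = y) :
    StrictAntiOn ψ (Ioo 0 (deriv φ 0)) := by
  intro y hy y' hy' hlt
  obtain ⟨h₀, h₁⟩ := hψ y hy.1 hy.2.le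
  obtain ⟨h₀', h₁'⟩ := hψ y' hy'.1 hy'.2.le
  by_contra! hle
  have := hanti.antitoneOn h₀ h₀' hle
  rw [h₁, h₁'] at this
  exact hlt.not_ge this

theorem continuousAt_inverse (hφ' : ∀ x, 0 < deriv φ x) (hanti : StrictAntiOn (deriv φ) (Ici 0))
    (hψ : ∀ y, 0 < y → y ≤ deriv φ 0 → 0 ≤ ψ y ∧ deriv φ (ψ y) = y)
    (hψinv : ∀ x, 0 ≤ x → ψ (deriv φ x) = x) {y : ℝ} (hy : y ∈ Ioo 0 (deriv φ 0)) :
    ContinuousAt ψ y := by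
  have hmono : MonotoneOn (-ψ) (Ioo 0 (deriv φ 0)) := (strictAntiOn_inverse hanti hψ).antitoneOn.neg
  -- `-ψ` maps `Ioo 0 (deriv φ 0)` onto `Iio 0`, a neighbourhood of `-ψ y`
  have himage : (-ψ) '' Ioo 0 (deriv φ 0) ∈ 𝓝 ((-ψ) y) := by
    refine mem_of_superset (Iio_mem_nhds (neg_neg_of_pos (inverse_pos_of_mem_Ioo hψ hy)))
      fun z hz => ?_
    have hz' : 0 < -z := neg_pos.mpr hz
    exact ⟨deriv φ (-z), ⟨hφ' _, hanti self_mem_Ici hz'.le hz'⟩, by simp [hψinv _ hz'.le]⟩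
  simpa using (continuousAt_of_monotoneOn_of_image_mem_nhds hmono (isOpen_Ioo.mem_nhds hy)
    himage).neg

theorem hasDerivAt_inverse (hφ : ContDiff ℝ 2 φ) (hφ' : ∀ x, 0 < deriv φ x)
    (hφ'' : ∀ x, x ≠ 0 → x * deriv (deriv φ) x < 0)
    (hψ : ∀ y, 0 < y → y ≤ deriv φ 0 → 0 ≤ ψ y ∧ deriv φ (ψ y) = y)
    (hψinv : ∀ x, 0 ≤ x → ψ (deriv φ x) = x) {y : ℝ} (hy : y ∈ Ioo 0 (deriv φ 0)) :
    HasDerivAt ψ (deriv (deriv φ) (ψ y))⁻¹ y := by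
  refine HasDerivAt.of_local_left_inverse
    (continuousAt_inverse hφ' (strictAntiOn_deriv_Ici hφ hφ'') hψ hψinv hy)
    (hφ.differentiable_deriv_two _).hasDerivAt ?_ ?_
  · exact (deriv_deriv_neg_of_pos hφ'' (inverse_pos_of_mem_Ioo hψ hy)).ne
  · filter_upwards [isOpen_Ioo.mem_nhds hy] with z hz using (hψ z hz.1 hz.2.le).2

theorem deriv_inverse_neg (hφ : ContDiff ℝ 2 φ) (hφ' : ∀ x, 0 < deriv φ x)
    (hφ'' : ∀ x, x ≠ 0 → x * deriv (deriv φ) x < 0)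
    (hψ : ∀ y, 0 < y → y ≤ deriv φ 0 → 0 ≤ ψ y ∧ deriv φ (ψ y) = y)
    (hψinv : ∀ x, 0 ≤ x → ψ (deriv φ x) = x) {y : ℝ} (hy : y ∈ Ioo 0 (deriv φ 0)) :
    deriv ψ y < 0 := by
  rw [(hasDerivAt_inverse hφ hφ' hφ'' hψ hψinv hy).deriv]
  exact inv_lt_zero.mpr (deriv_deriv_neg_of_pos hφ'' (inverse_pos_of_mem_Ioo hψ hy))

end Derivatives

theorem IsLocalMaxOn.exists_inverse_eq_abs {ι : Type*} [Fintype ι] [Nonempty ι] {φ ψ : ℝ → ℝ}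
    (hφ : ContDiff ℝ 2 φ) (hodd : Function.Odd φ) (hφ' : ∀ x, 0 < deriv φ x)
    (hφ'' : ∀ x, x ≠ 0 → x * deriv (deriv φ) x < 0) (hψinv : ∀ x, 0 ≤ x → ψ (deriv φ x) = x)
    {c l q : ι → ℝ} (hc : ∀ j, 0 < c j) (hl : ∀ j, 0 < l j) (hq : ∀ j, q j = l j / c j) {b : ℝ}
    {x : EuclideanSpace ℝ ι}
    (hmax : IsLocalMaxOn (fun y : EuclideanSpace ℝ ι => ∑ i, c i * φ (y i))
      {y | ∑ j, l j * y j = b} x)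
    (hx : ∑ j, l j * x j = b) (hne : ∀ j, x j ≠ 0) :
    ∃ β > 0, (∀ j, deriv φ (x j) = β * q j) ∧ (∀ j, β * q j < deriv φ 0) ∧
      ∀ j, ψ (β * q j) = |x j| := by
  obtain ⟨β, hβ, hderiv⟩ := hmax.exists_deriv_eq_mul_div hφ hφ' hc hl hx
  simp only [← hq] at hderiv
  refine ⟨β, hβ, hderiv, fun j => ?_, fun j => ?_⟩ <;> rw [← hderiv j]
  · exact (deriv_mem_Ioo_of_ne_zero hodd hφ' (strictAntiOn_deriv_Ici hφ hφ'') (hne j)).2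
  · exact inverse_deriv_eq_abs hodd hψinv (x j)

theorem sum_sq_div_mul_neg_inv_le_of_quadratic_nonpos {n : ℕ} {c l a : Fin (n + 1) → ℝ}
    (hc : ∀ j, 0 < c j) (hl : l (Fin.last n) ≠ 0) (ha : ∀ i : Fin n, a i.castSucc < 0)
    (ha_last : 0 < a (Fin.last n))
    (h : ∀ v : Fin (n + 1) → ℝ, ∑ j, l j * v j = 0 → ∑ j, c j * a j * v j ^ 2 ≤ 0) :
    ∑ i : Fin n, l i.castSucc ^ 2 / c i.castSucc * -(a i.castSucc)⁻¹ ≤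
      l (Fin.last n) ^ 2 / c (Fin.last n) * (a (Fin.last n))⁻¹ := by
  set L := Fin.last n
  set S := ∑ i : Fin n, l i.castSucc ^ 2 / c i.castSucc * -(a i.castSucc)⁻¹
  have hS : 0 ≤ S := Finset.sum_nonneg fun i _ =>
    mul_nonneg (div_nonneg (sq_nonneg _) (hc _).le) (neg_nonneg.mpr (inv_lt_zero.mpr (ha i)).le)
  -- equality case of Cauchy–Schwarz: on `v` the form equals `-S + c L * a L * S ^ 2 / l L ^ 2`
  let v : Fin (n + 1) → ℝ :=
    Fin.snoc (fun i : Fin n => l i.castSucc / c i.castSucc * -(a i.castSucc)⁻¹) (-S / l L)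
  have hv : ∑ j, l j * v j = 0 := by
    rw [Fin.sum_univ_castSucc]
    simp only [v, Fin.snoc_castSucc, Fin.snoc_last]
    rw [show ∑ i : Fin n, l i.castSucc * (l i.castSucc / c i.castSucc * -(a i.castSucc)⁻¹) = S from
      Finset.sum_congr rfl fun i _ => by ring]
    field_simp
    ring
  have hterm : ∀ i : Fin n, c i.castSucc * a i.castSucc *
      (l i.castSucc / c i.castSucc * -(a i.castSucc)⁻¹) ^ 2 =
        -(l i.castSucc ^ 2 / c i.castSucc * -(a i.castSucc)⁻¹) := fun i => by
    have := (hc i.castSucc).ne'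
    have := (ha i).ne
    field_simp
  have hform := h v hv
  rw [Fin.sum_univ_castSucc] at hform
  simp only [v, Fin.snoc_castSucc, Fin.snoc_last, hterm, Finset.sum_neg_distrib] at hform
  rcases hS.eq_or_lt with hS0 | hSpos
  · rw [← hS0]
    exact mul_nonneg (div_nonneg (sq_nonneg _) (hc L).le) (inv_nonneg.mpr ha_last.le)
  have hl2 : 0 < l L ^ 2 := by positivity
  have hquad : c L * a L * S ^ 2 ≤ S * l L ^ 2 := by
    rw [← div_le_iff₀ hl2]
    rw [div_pow, neg_sq] at hform
    linarith [mul_div_assoc (c L * a L) (S ^ 2) (l L ^ 2)]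
  rw [← div_eq_mul_inv, div_div, le_div_iff₀ (mul_pos (hc L) ha_last)]
  nlinarith

theorem le_sum_deriv_inverse_of_isLocalMaxOn {n : ℕ} {φ ψ : ℝ → ℝ} (hφ : ContDiff ℝ 2 φ)
    (hodd : Function.Odd φ) (hφ' : ∀ x, 0 < deriv φ x)
    (hφ'' : ∀ x, x ≠ 0 → x * deriv (deriv φ) x < 0)
    (hψ : ∀ y, 0 < y → y ≤ deriv φ 0 → 0 ≤ ψ y ∧ deriv φ (ψ y) = y)
    (hψinv : ∀ x, 0 ≤ x → ψ (deriv φ x) = x) {c l q : Fin (n + 1) → ℝ} (hc : ∀ j, 0 < c j)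
    (hl : ∀ j, 0 < l j) (hq : ∀ j, q j = l j / c j) {b β : ℝ}
    {x : EuclideanSpace ℝ (Fin (n + 1))}
    (hmax : IsLocalMaxOn (fun y : EuclideanSpace ℝ (Fin (n + 1)) => ∑ i, c i * φ (y i))
      {y | ∑ j, l j * y j = b} x)
    (hx : ∑ j, l j * x j = b) (hpos : ∀ i : Fin n, 0 < x i.castSucc) (hneg : x (Fin.last n) < 0)
    (hβ : ∀ j, deriv φ (x j) = β * q j) :
    l (Fin.last n) * (q (Fin.last n) * deriv ψ (β * q (Fin.last n))) ≤
      ∑ i : Fin n, l i.castSucc * q i.castSucc * deriv ψ (β * q i.castSucc) := by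
  have hderiv : ∀ j, x j ≠ 0 → deriv ψ (β * q j) = (deriv (deriv φ) |x j|)⁻¹ := fun j hj => by
    rw [← hβ j, (hasDerivAt_inverse hφ hφ' hφ'' hψ hψinv
      (deriv_mem_Ioo_of_ne_zero hodd hφ' (strictAntiOn_deriv_Ici hφ hφ'') hj)).deriv,
      inverse_deriv_eq_abs hodd hψinv]
  have hquad := sum_sq_div_mul_neg_inv_le_of_quadratic_nonpos
    (a := fun j => deriv (deriv φ) (x j)) hc (hl _).ne'
    (fun i => deriv_deriv_neg_of_pos hφ'' (hpos i)) (deriv_deriv_pos_of_neg hφ'' hneg)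
    fun v hv => (hmax.optimality_on_hyperplane hφ hx hv).2
  calc _ = -(l (Fin.last n) ^ 2 / c (Fin.last n) * (deriv (deriv φ) (x (Fin.last n)))⁻¹) := by
        rw [hderiv _ hneg.ne, abs_of_neg hneg, hodd.even_deriv.odd_deriv, hq, inv_neg]
        ring
    _ ≤ -∑ i : Fin n, l i.castSucc ^ 2 / c i.castSucc * -(deriv (deriv φ) (x i.castSucc))⁻¹ :=
        neg_le_neg hquad
    _ = _ := by
        rw [← Finset.sum_neg_distrib]
        refine Finset.sum_congr rfl fun i _ => ?_
        rw [hderiv _ (hpos i).ne', abs_of_pos (hpos i), hq]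
        ring

section RatioMonotone

variable {ψ : ℝ → ℝ} {D p r : ℝ}

theorem div_mul_deriv_le_of_monotoneOn_deriv_div (hψ' : ∀ y ∈ Ioo 0 D, deriv ψ y < 0)
    (hmono : MonotoneOn (fun β => deriv ψ (β * p) / deriv ψ (β * r)) (Ioo 0 (D / p)))
    (hp : 0 < p) (hr : 0 < r) (hrp : r < p) {β₁ β : ℝ} (hβ₁ : 0 < β₁) (hβ₁β : β₁ ≤ β)
    (hβ : β * p < D) :
    deriv ψ (β₁ * r) / deriv ψ (β₁ * p) * deriv ψ (β * p) ≤ deriv ψ (β * r) := by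
  have hβ₁p : β₁ * p < D := (mul_le_mul_of_nonneg_right hβ₁β hp.le).trans_lt hβ
  have hmem : ∀ γ, 0 < γ → γ * p < D → γ * r ∈ Ioo 0 D ∧ γ * p ∈ Ioo 0 D := fun γ hγ hγp =>
    ⟨⟨by positivity, (mul_lt_mul_of_pos_left hrp hγ).trans hγp⟩, ⟨by positivity, hγp⟩⟩
  have hA := hψ' _ (hmem β₁ hβ₁ hβ₁p).2
  have hB := hψ' _ (hmem β₁ hβ₁ hβ₁p).1
  have hE := hψ' _ (hmem β (hβ₁.trans_le hβ₁β) hβ).1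
  have hratio := hmono ⟨hβ₁, (lt_div_iff₀ hp).mpr hβ₁p⟩
    ⟨hβ₁.trans_le hβ₁β, (lt_div_iff₀ hp).mpr hβ⟩ hβ₁β
  simp only at hratio
  rw [← neg_div_neg_eq, ← neg_div_neg_eq (deriv ψ (β * p)),
    div_le_div_iff₀ (neg_pos.mpr hB) (neg_pos.mpr hE)] at hratio
  rw [div_mul_eq_mul_div, div_le_iff_of_neg hA]
  linarith

theorem sub_le_mul_sub_of_monotoneOn_deriv_div (hψd : DifferentiableOn ℝ ψ (Ioo 0 D))
    (hψ' : ∀ y ∈ Ioo 0 D, deriv ψ y < 0)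
    (hmono : MonotoneOn (fun β => deriv ψ (β * p) / deriv ψ (β * r)) (Ioo 0 (D / p)))
    (hr : 0 < r) (hrp : r < p) {β₁ β₂ : ℝ} (hβ₁ : 0 < β₁) (hβ₁₂ : β₁ ≤ β₂) (hβ₂ : β₂ * p < D) :
    ψ (β₁ * r) - ψ (β₂ * r) ≤
      r * deriv ψ (β₁ * r) / (p * deriv ψ (β₁ * p)) * (ψ (β₁ * p) - ψ (β₂ * p)) := by
  set κ := r * deriv ψ (β₁ * r) / (p * deriv ψ (β₁ * p))
  have hp : 0 < p := hr.trans hrp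
  have hmem : ∀ β ∈ Icc β₁ β₂, β * r ∈ Ioo 0 D ∧ β * p ∈ Ioo 0 D := fun β hβ =>
    have hβ0 : 0 < β := hβ₁.trans_le hβ.1
    have hβp : β * p < D := (mul_le_mul_of_nonneg_right hβ.2 hp.le).trans_lt hβ₂
    ⟨⟨by positivity, (mul_lt_mul_of_pos_left hrp hβ0).trans hβp⟩, ⟨by positivity, hβp⟩⟩
  have hderiv : ∀ β ∈ Icc β₁ β₂, HasDerivAt (fun β => ψ (β * r) - κ * ψ (β * p))
      (deriv ψ (β * r) * r - κ * (deriv ψ (β * p) * p)) β := fun β hβ =>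
    ((hψd.differentiableAt (isOpen_Ioo.mem_nhds (hmem β hβ).1)).hasDerivAt.comp β
      (hasDerivAt_mul_const r)).sub
    (((hψd.differentiableAt (isOpen_Ioo.mem_nhds (hmem β hβ).2)).hasDerivAt.comp β
      (hasDerivAt_mul_const p)).const_mul κ)
  have hw : MonotoneOn (fun β => ψ (β * r) - κ * ψ (β * p)) (Icc β₁ β₂) := by
    refine monotoneOn_of_deriv_nonneg (convex_Icc β₁ β₂)
      (fun β hβ => (hderiv β hβ).continuousAt.continuousWithinAt) (fun β hβ => ?_) fun β hβ => ?_
    <;> rw [interior_Icc] at hβ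
    · exact (hderiv β (Ioo_subset_Icc_self hβ)).differentiableAt.differentiableWithinAt
    have hle := div_mul_deriv_le_of_monotoneOn_deriv_div hψ' hmono hp hr hrp hβ₁ hβ.1.le
      (hmem β (Ioo_subset_Icc_self hβ)).2.2
    have hA := hψ' _ (hmem β₁ (left_mem_Icc.mpr hβ₁₂)).2
    rw [(hderiv β (Ioo_subset_Icc_self hβ)).deriv]
    have hκ : κ * (deriv ψ (β * p) * p) =
        r * (deriv ψ (β₁ * r) / deriv ψ (β₁ * p) * deriv ψ (β * p)) := by
      simp only [κ]
      field_simp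
    nlinarith
  have := hw (left_mem_Icc.mpr hβ₁₂) (right_mem_Icc.mpr hβ₁₂) hβ₁₂
  simp only at this
  linarith

theorem le_mul_of_antitoneOn_div (hψpos : ∀ y ∈ Ioo 0 D, 0 < ψ y)
    (hψd : DifferentiableOn ℝ ψ (Ioo 0 D)) (hψ' : ∀ y ∈ Ioo 0 D, deriv ψ y < 0)
    (hanti : AntitoneOn (fun β => ψ (β * r) / ψ (β * p)) (Ioo 0 (D / r)))
    (hp : 0 < p) (hpr : p < r) {β : ℝ} (hβ : 0 < β) (hβr : β * r < D) :
    ψ (β * r) ≤ r * deriv ψ (β * r) / (p * deriv ψ (β * p)) * ψ (β * p) := by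
  have hr : 0 < r := hp.trans hpr
  have hmemr : β * r ∈ Ioo 0 D := ⟨by positivity, hβr⟩
  have hmemp : β * p ∈ Ioo 0 D := ⟨by positivity, (mul_lt_mul_of_pos_left hpr hβ).trans hβr⟩
  have hderiv : HasDerivAt (fun β => ψ (β * r) / ψ (β * p))
      ((deriv ψ (β * r) * r * ψ (β * p) - ψ (β * r) * (deriv ψ (β * p) * p)) / ψ (β * p) ^ 2) β :=
    (((hψd.differentiableAt (isOpen_Ioo.mem_nhds hmemr)).hasDerivAt.comp β
      (hasDerivAt_mul_const r)).div
    ((hψd.differentiableAt (isOpen_Ioo.mem_nhds hmemp)).hasDerivAt.comp β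
      (hasDerivAt_mul_const p)) (hψpos _ hmemp).ne')
  have hnonpos := hanti.derivWithin_nonpos (x := β)
  rw [derivWithin_of_isOpen isOpen_Ioo ⟨hβ, (lt_div_iff₀ hr).mpr hβr⟩, hderiv.deriv,
    div_le_iff₀ (pow_pos (hψpos _ hmemp) 2), zero_mul] at hnonpos
  have hC := hψ' _ hmemp
  rw [div_mul_eq_mul_div, le_div_iff_of_neg (mul_neg_of_pos_of_neg hp hC)]
  linarith

theorem sub_le_mul_of_ne (hψpos : ∀ y ∈ Ioo 0 D, 0 < ψ y)
    (hψd : DifferentiableOn ℝ ψ (Ioo 0 D)) (hψ' : ∀ y ∈ Ioo 0 D, deriv ψ y < 0)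
    (hA2 : ∀ s t : ℝ, 0 < t → t < s →
      MonotoneOn (fun β => deriv ψ (β * s) / deriv ψ (β * t)) (Ioo 0 (D / s)))
    (hA4 : ∀ s t : ℝ, 0 < t → t < s →
      AntitoneOn (fun β => ψ (β * s) / ψ (β * t)) (Ioo 0 (D / s)))
    (hp : 0 < p) (hr : 0 < r) (hrp : r ≠ p) {β₁ β₂ : ℝ} (hβ₁ : 0 < β₁) (hβ₁₂ : β₁ ≤ β₂)
    (hβ₂p : β₂ * p < D) (hβ₂r : β₂ * r < D) :
    ψ (β₁ * r) - ψ (β₂ * r) ≤ r * deriv ψ (β₁ * r) / (p * deriv ψ (β₁ * p)) * ψ (β₁ * p) := by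
  have hβ₂ : 0 < β₂ := hβ₁.trans_le hβ₁₂
  have hψ₂r := hψpos _ ⟨by positivity, hβ₂r⟩
  rcases hrp.lt_or_gt with hrp | hpr
  · have hψ₂p := hψpos _ ⟨by positivity, hβ₂p⟩
    have hβ₁p : β₁ * p < D := (mul_le_mul_of_nonneg_right hβ₁₂ hp.le).trans_lt hβ₂p
    have hκ : 0 < r * deriv ψ (β₁ * r) / (p * deriv ψ (β₁ * p)) :=
      div_pos_of_neg_of_neg (mul_neg_of_pos_of_neg hr (hψ' _ ⟨by positivity,
        (mul_lt_mul_of_pos_left hrp hβ₁).trans hβ₁p⟩))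
        (mul_neg_of_pos_of_neg hp (hψ' _ ⟨by positivity, hβ₁p⟩))
    have := sub_le_mul_sub_of_monotoneOn_deriv_div hψd hψ' (hA2 p r hr hrp) hr hrp hβ₁ hβ₁₂ hβ₂p
    nlinarith
  · have := le_mul_of_antitoneOn_div hψpos hψd hψ' (hA4 r p hp hpr) hp hpr hβ₁
      ((mul_le_mul_of_nonneg_right hβ₁₂ hr.le).trans_lt hβ₂r)
    linarith

theorem sum_castSucc_sub_last_lt_sum {n : ℕ} {l q : Fin (n + 1) → ℝ} {β₀ β₁ : ℝ}
    (hψpos : ∀ y ∈ Ioo 0 D, 0 < ψ y) (hψanti : AntitoneOn ψ (Ioo 0 D))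
    (hψd : DifferentiableOn ℝ ψ (Ioo 0 D)) (hψ' : ∀ y ∈ Ioo 0 D, deriv ψ y < 0)
    (hA2 : ∀ s t : ℝ, 0 < t → t < s →
      MonotoneOn (fun β => deriv ψ (β * s) / deriv ψ (β * t)) (Ioo 0 (D / s)))
    (hA4 : ∀ s t : ℝ, 0 < t → t < s →
      AntitoneOn (fun β => ψ (β * s) / ψ (β * t)) (Ioo 0 (D / s)))
    (hl : ∀ j, 0 < l j) (hq : ∀ j, 0 < q j) (hqinj : Function.Injective q)
    (hβ₀ : 0 < β₀) (hβ₁ : 0 < β₁) (hβ₀D : ∀ j, β₀ * q j < D) (hβ₁D : ∀ j, β₁ * q j < D)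
    (hsoc : l (Fin.last n) * (q (Fin.last n) * deriv ψ (β₁ * q (Fin.last n))) ≤
      ∑ i : Fin n, l i.castSucc * q i.castSucc * deriv ψ (β₁ * q i.castSucc)) :
    ∑ i : Fin n, l i.castSucc * ψ (β₁ * q i.castSucc) - l (Fin.last n) * ψ (β₁ * q (Fin.last n)) <
      ∑ j, l j * ψ (β₀ * q j) := by
  set L := Fin.last n
  set β₂ := max β₀ β₁
  have hβ₂ : 0 < β₂ := hβ₀.trans_le (le_max_left _ _)
  have hβ₂D : ∀ j, β₂ * q j < D := fun j => by
    rw [max_mul_of_nonneg _ _ (hq j).le]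
    exact max_lt (hβ₀D j) (hβ₁D j)
  have hmem : ∀ β, 0 < β → (∀ j, β * q j < D) → ∀ j, β * q j ∈ Ioo 0 D :=
    fun β hβ hβD j => ⟨mul_pos hβ (hq j), hβD j⟩
  set N := q L * deriv ψ (β₁ * q L)
  have hN : N < 0 := mul_neg_of_pos_of_neg (hq L) (hψ' _ (hmem β₁ hβ₁ hβ₁D L))
  have hψL := hψpos _ (hmem β₁ hβ₁ hβ₁D L)
  have hterm : ∀ i : Fin n, l i.castSucc * (ψ (β₁ * q i.castSucc) - ψ (β₂ * q i.castSucc)) ≤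
      l i.castSucc * q i.castSucc * deriv ψ (β₁ * q i.castSucc) / N * ψ (β₁ * q L) := fun i =>
    calc _ ≤ l i.castSucc * (q i.castSucc * deriv ψ (β₁ * q i.castSucc) / N * ψ (β₁ * q L)) :=
          mul_le_mul_of_nonneg_left (sub_le_mul_of_ne hψpos hψd hψ' hA2 hA4 (hq L)
            (hq i.castSucc) (hqinj.ne (Fin.castSucc_lt_last i).ne) hβ₁ (le_max_right β₀ β₁)
            (hβ₂D L) (hβ₂D _)) (hl i.castSucc).le
      _ = _ := by ring
  have hincrements : ∑ i : Fin n, l i.castSucc * ψ (β₁ * q i.castSucc) -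
      ∑ i : Fin n, l i.castSucc * ψ (β₂ * q i.castSucc) ≤ l L * ψ (β₁ * q L) := by
    have hsum := Finset.sum_le_sum fun i (_ : i ∈ Finset.univ) => hterm i
    rw [← Finset.sum_mul, ← Finset.sum_div] at hsum
    simp only [mul_sub, Finset.sum_sub_distrib] at hsum
    exact hsum.trans (mul_le_mul_of_nonneg_right ((div_le_iff_of_neg hN).mpr hsoc) hψL.le)
  calc _ ≤ ∑ i : Fin n, l i.castSucc * ψ (β₂ * q i.castSucc) := by linarith
    _ < ∑ j, l j * ψ (β₂ * q j) := by
        rw [Fin.sum_univ_castSucc]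
        linarith [mul_pos (hl L) (hψpos _ (hmem β₂ hβ₂ hβ₂D L))]
    _ ≤ ∑ j, l j * ψ (β₀ * q j) := Finset.sum_le_sum fun j _ =>
        mul_le_mul_of_nonneg_left (hψanti (hmem β₀ hβ₀ hβ₀D j) (hmem β₂ hβ₂ hβ₂D j)
          (mul_le_mul_of_nonneg_right (le_max_left _ _) (hq j).le)) (hl j).le

end RatioMonotone

theorem stmt_11_general (n : ℕ) (φ ψ : ℝ → ℝ)
    (hφC : ContDiff ℝ 2 φ)
    (hodd : ∀ x : ℝ, φ (-x) = -φ x)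
    (hφ' : ∀ x : ℝ, 0 < deriv φ x)
    (hφ'' : ∀ x : ℝ, x ≠ 0 → x * deriv (deriv φ) x < 0)
    (hψ : ∀ y : ℝ, 0 < y → y ≤ deriv φ 0 → 0 ≤ ψ y ∧ deriv φ (ψ y) = y)
    (hψinv : ∀ x : ℝ, 0 ≤ x → ψ (deriv φ x) = x)
    (hA2 : ∀ p q : ℝ, 0 < q → q < p →
      StrictMonoOn (fun β => deriv ψ (β * p) / deriv ψ (β * q))
        (Set.Ioo 0 (deriv φ 0 / p)))
    (hA4 : ∀ p q : ℝ, 0 < q → q < p →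
      StrictAntiOn (fun β => ψ (β * p) / ψ (β * q))
        (Set.Ioo 0 (deriv φ 0 / p)))
    (c l q : Fin (n + 1) → ℝ) (hc : ∀ j, 0 < c j) (hl : ∀ j, 0 < l j)
    (hq : ∀ j, q j = l j / c j) (hqinj : Function.Injective q) (b : ℝ)
    (f : EuclideanSpace ℝ (Fin (n + 1)) → ℝ)
    (hf : ∀ x : EuclideanSpace ℝ (Fin (n + 1)), f x = ∑ i, c i * φ (x i))
    (P : Set (EuclideanSpace ℝ (Fin (n + 1))))
    (hP : P = {x : EuclideanSpace ℝ (Fin (n + 1)) | ∑ j, l j * x j = b}) :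
    ¬ ∃ x₀ x₁ : EuclideanSpace ℝ (Fin (n + 1)),
      x₀ ∈ P ∧ x₁ ∈ P ∧
      (∃ ε > 0, ∀ x ∈ P, ‖x - x₀‖ < ε → f x ≤ f x₀) ∧
      (∃ ε > 0, ∀ x ∈ P, ‖x - x₁‖ < ε → f x ≤ f x₁) ∧
      (∀ j, 0 < x₀ j) ∧
      (∀ j, j ≠ Fin.last n → 0 < x₁ j) ∧ x₁ (Fin.last n) < 0 := by
  rintro ⟨x₀, x₁, hx₀P, hx₁P, hloc₀, hloc₁, hpos₀, hpos₁, hneg₁⟩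
  subst hP
  obtain rfl : f = fun x => ∑ i, c i * φ (x i) := funext hf
  have hpos₁' : ∀ i : Fin n, 0 < x₁ i.castSucc := fun i => hpos₁ _ (Fin.castSucc_lt_last i).ne
  have hmax₁ := isLocalMaxOn_of_forall_norm_sub_lt hloc₁
  obtain ⟨β₀, hβ₀, -, hD₀, hψ₀⟩ := (isLocalMaxOn_of_forall_norm_sub_lt hloc₀).exists_inverse_eq_abs
    hφC hodd hφ' hφ'' hψinv hc hl hq hx₀P fun j => (hpos₀ j).ne'
  obtain ⟨β₁, hβ₁, hx₁, hD₁, hψ₁⟩ := hmax₁.exists_inverse_eq_abs hφC hodd hφ' hφ'' hψinv hc hl hq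
    hx₁P (Fin.lastCases hneg₁.ne fun i => (hpos₁' i).ne')
  have hb₀ : ∑ j, l j * ψ (β₀ * q j) = b := by
    simpa only [hψ₀, abs_of_pos (hpos₀ _), mem_ofPred_eq] using hx₀P
  have hb₁ : ∑ i : Fin n, l i.castSucc * ψ (β₁ * q i.castSucc) -
      l (Fin.last n) * ψ (β₁ * q (Fin.last n)) = b := by
    simp only [hψ₁, abs_of_pos (hpos₁' _), abs_of_neg hneg₁]
    rw [← hx₁P, Fin.sum_univ_castSucc]
    ring
  refine (sum_castSucc_sub_last_lt_sum (fun y hy => inverse_pos_of_mem_Ioo hψ hy)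
    (strictAntiOn_inverse (strictAntiOn_deriv_Ici hφC hφ'') hψ).antitoneOn
    (fun y hy =>
      (hasDerivAt_inverse hφC hφ' hφ'' hψ hψinv hy).differentiableAt.differentiableWithinAt)
    (fun y hy => deriv_inverse_neg hφC hφ' hφ'' hψ hψinv hy)
    (fun s t ht hts => (hA2 s t ht hts).monotoneOn) (fun s t ht hts => (hA4 s t ht hts).antitoneOn)
    hl (fun j => hq j ▸ div_pos (hl j) (hc j)) hqinj hβ₀ hβ₁ hD₀ hD₁
    (le_sum_deriv_inverse_of_isLocalMaxOn hφC hodd hφ' hφ'' hψ hψinv hc hl hq hmax₁ hx₁P hpos₁'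
      hneg₁ hx₁)).ne (hb₁.trans hb₀.symm)

/-- Under (A1)–(A4), with `cⱼ > 0`, `lⱼ > 0` and `qⱼ = lⱼ/cⱼ` pairwise
distinct, `f` cannot have a local maximum on `P` in the open main orthant and another
one in the side orthant `{x : xⱼ > 0 for j ≠ n, xₙ < 0}`. -/
theorem stmt_11 (n : ℕ) (hn : 1 ≤ n) (φ ψ : ℝ → ℝ)
    (hφC : ContDiff ℝ 2 φ)
    (hodd : ∀ x : ℝ, φ (-x) = -φ x)
    (hφ' : ∀ x : ℝ, 0 < deriv φ x)
    (hφ'' : ∀ x : ℝ, x ≠ 0 → x * deriv (deriv φ) x < 0)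
    (hlim : ∃ L : ℝ, Filter.Tendsto φ Filter.atTop (nhds L))
    (hψ : ∀ y : ℝ, 0 < y → y ≤ deriv φ 0 → 0 ≤ ψ y ∧ deriv φ (ψ y) = y)
    (hψinv : ∀ x : ℝ, 0 ≤ x → ψ (deriv φ x) = x)
    (hA2 : ∀ p q : ℝ, 0 < q → q < p →
      StrictMonoOn (fun β => deriv ψ (β * p) / deriv ψ (β * q))
        (Set.Ioo 0 (deriv φ 0 / p)))
    (hA3 : ∀ qj qn ql : ℝ, 0 < qj → qj < qn → qn < ql →
      StrictMonoOn (fun β => deriv (fun t => deriv ψ (t * qj) / deriv ψ (t * qn)) β /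
          deriv (fun t => deriv ψ (t * ql) / deriv ψ (t * qn)) β)
        (Set.Ioo 0 (deriv φ 0 / ql)) ∨
      StrictAntiOn (fun β => deriv (fun t => deriv ψ (t * qj) / deriv ψ (t * qn)) β /
          deriv (fun t => deriv ψ (t * ql) / deriv ψ (t * qn)) β)
        (Set.Ioo 0 (deriv φ 0 / ql)))
    (hA4 : ∀ p q : ℝ, 0 < q → q < p →
      StrictAntiOn (fun β => ψ (β * p) / ψ (β * q))
        (Set.Ioo 0 (deriv φ 0 / p)))
    (c l q : Fin (n + 1) → ℝ) (hc : ∀ j, 0 < c j) (hl : ∀ j, 0 < l j)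
    (hq : ∀ j, q j = l j / c j) (hqinj : Function.Injective q) (b : ℝ)
    (f : EuclideanSpace ℝ (Fin (n + 1)) → ℝ)
    (hf : ∀ x : EuclideanSpace ℝ (Fin (n + 1)), f x = ∑ i, c i * φ (x i))
    (P : Set (EuclideanSpace ℝ (Fin (n + 1))))
    (hP : P = {x : EuclideanSpace ℝ (Fin (n + 1)) | ∑ j, l j * x j = b}) :
    ¬ ∃ x₀ x₁ : EuclideanSpace ℝ (Fin (n + 1)),
      x₀ ∈ P ∧ x₁ ∈ P ∧
      (∃ ε > 0, ∀ x ∈ P, ‖x - x₀‖ < ε → f x ≤ f x₀) ∧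
      (∃ ε > 0, ∀ x ∈ P, ‖x - x₁‖ < ε → f x ≤ f x₁) ∧
      (∀ j, 0 < x₀ j) ∧
      (∀ j, j ≠ Fin.last n → 0 < x₁ j) ∧ x₁ (Fin.last n) < 0 :=
  stmt_11_general n φ ψ hφC hodd hφ' hφ'' hψ hψinv hA2 hA4 c l q hc hl hq hqinj b f hf P hP
end
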